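/- Let f ∈ F₁(a,b) with a ≥ 0, let P be a probability measure on a measurable space (Ω,M), and let φ₁,…,φ_k : Ω → ℝ be measurable with φ_i ∈ L¹(P) and, for each i, suppose there exist c_i⁺, c_i⁻ > 0 and ν_i⁺, ν_i⁻ ∈ ℝ such that E_P[(f*(c_i⁺φ_i − ν_i⁺))⁺] < ∞ and E_P[(f*(−c_i⁻φ_i − ν_i⁻))⁺] < ∞. Then for every η > 0 there exist real numbers M_{i,η}⁻, M_{i,η}⁺, i = 1,…,k, such that E_Q[φ_i] ∈ [−M_{i,η}⁻, M_{i,η}⁺] for all i and all probability measures Q on (Ω,M) with D_f(Q,P) ≤ η. -/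

import Mathlib

open MeasureTheory Filter Set
open scoped ENNReal NNReal Classical

/-- The positive part of an extended real number, as an element of `ℝ≥0∞`. -/
noncomputable def erealPos (x : EReal) : ℝ≥0∞ := if x = ⊤ then ⊤ else ENNReal.ofReal x.toReal

/-- Extended expectation of an `EReal`-valued function, with the convention `∞ - ∞ = ∞`. -/
noncomputable def feexp {Ω : Type*} [MeasurableSpace Ω] (P : Measure Ω) (g : Ω → EReal) : EReal :=
  if ∫⁻ x, erealPos (g x) ∂P = ⊤ then ⊤
  else ((∫⁻ x, erealPos (g x) ∂P).toReal : EReal) - ((∫⁻ x, erealPos (-(g x)) ∂P : ℝ≥0∞) : EReal)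

/-- The extension of a convex function `f : (a,b) → ℝ` to a convex, lower semicontinuous
function `ℝ → (-∞,∞]`, taking the limiting values at finite endpoints and `∞` outside `[a,b]`. -/
noncomputable def fExt (a b : EReal) (f : ℝ → ℝ) (x : ℝ) : EReal :=
  if a < (x : EReal) ∧ (x : EReal) < b then (f x : EReal)
  else if (x : EReal) = a then limsup (fun t : ℝ => (f t : EReal)) (nhdsWithin x (Ioi x))
  else if (x : EReal) = b then limsup (fun t : ℝ => (f t : EReal)) (nhdsWithin x (Iio x))
  else ⊤

/-- The `f`-divergence `D_f(Q,P) = E_P[f(dQ/dP)]` for `Q ≪ P`, and `∞` otherwise. -/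
noncomputable def fDivg {Ω : Type*} [MeasurableSpace Ω] (a b : EReal) (f : ℝ → ℝ)
    (Q P : Measure Ω) : EReal :=
  if Q ≪ P then feexp P (fun x => fExt a b f ((Q.rnDeriv P) x).toReal) else ⊤

/-- The Legendre transform `f*(y) = sup_{x ∈ (a,b)} {x y - f x}`. -/
noncomputable def legT (a b : EReal) (f : ℝ → ℝ) (y : ℝ) : EReal :=
  ⨆ x : {t : ℝ // a < (t : EReal) ∧ (t : EReal) < b}, ((x.1 * y - f x.1 : ℝ) : EReal)

open Topology

/-!
Young's inequality `ρ y ≤ f(ρ) + f*(y)`, applied at `ρ = dQ/dP` and `y = c φ - ν`, gives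
`c E_Q[φ] ≤ E_P[f(dQ/dP)⁺] + |ν| + E_P[f*(c φ - ν)⁺]`. A supporting line of the convex `f` at `1`
bounds `E_P[f(dQ/dP)⁻]` by a constant, so `D_f(Q,P) ≤ η` bounds `E_P[f(dQ/dP)⁺]` uniformly in `Q`.
Doing this for `φ` and `-φ` bounds `E_Q[φ⁺]` and `E_Q[φ⁻]`.
-/

lemma erealPos_eq_toENNReal : erealPos = EReal.toENNReal := rfl

lemma ConvexOn.add_rightDeriv_mul_sub_le {S : Set ℝ} {f : ℝ → ℝ} {x y : ℝ}
    (hf : ConvexOn ℝ S f) (hx : x ∈ interior S) (hy : y ∈ S) :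
    f x + derivWithin f (Ioi x) x * (y - x) ≤ f y := by
  rcases lt_trichotomy x y with hxy | rfl | hyx
  · have h := hf.rightDeriv_le_slope_of_mem_interior hx hy hxy
    rw [slope_def_field, le_div_iff₀ (sub_pos.2 hxy)] at h
    linarith
  · simp
  · have h := (hf.slope_le_leftDeriv_of_mem_interior hy hx hyx).trans
      (hf.leftDeriv_le_rightDeriv_of_mem_interior hx)
    rw [slope_def_field, div_le_iff₀ (sub_pos.2 hyx)] at h
    linarith

lemma Filter.Tendsto.coe_le_limsup {α : Type*} {l : Filter α} [l.NeBot] {g f : α → ℝ}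
    {x : ℝ} (hg : Tendsto g l (𝓝 x)) (hgf : ∀ᶠ t in l, g t ≤ f t) :
    (x : EReal) ≤ limsup (fun t => (f t : EReal)) l := by
  rw [← ((continuous_coe_real_ereal.tendsto x).comp hg).limsup_eq]
  exact limsup_le_limsup (hgf.mono fun t ht => EReal.coe_le_coe_iff.2 ht)

section LegendrePair

variable {a b : EReal} {f : ℝ → ℝ}

lemma isOpen_setOf_coe_mem_Ioo : IsOpen {t : ℝ | a < (t : EReal) ∧ (t : EReal) < b} :=
  isOpen_Ioo.preimage continuous_coe_real_ereal

lemma coe_le_fExt_of_continuous (hab : a < b) {g : ℝ → ℝ} (hg : Continuous g)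
    (hgf : ∀ t : ℝ, a < (t : EReal) → (t : EReal) < b → g t ≤ f t) (ρ : ℝ) :
    (g ρ : EReal) ≤ fExt a b f ρ := by
  unfold fExt
  split_ifs with hin hρa hρb
  · exact EReal.coe_le_coe_iff.2 (hgf ρ hin.1 hin.2)
  · refine ((hg.tendsto ρ).mono_left nhdsWithin_le_nhds).coe_le_limsup ?_
    have hρb : (ρ : EReal) < b := hρa ▸ hab
    filter_upwards [self_mem_nhdsWithin, nhdsWithin_le_nhds
      ((continuous_coe_real_ereal.tendsto ρ).eventually (eventually_lt_nhds hρb))]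
      with t (hρt : ρ < t) htb
    exact hgf t (hρa ▸ EReal.coe_lt_coe_iff.2 hρt) htb
  · refine ((hg.tendsto ρ).mono_left nhdsWithin_le_nhds).coe_le_limsup ?_
    have haρ : a < (ρ : EReal) := hρb ▸ hab
    filter_upwards [self_mem_nhdsWithin, nhdsWithin_le_nhds
      ((continuous_coe_real_ereal.tendsto ρ).eventually (eventually_gt_nhds haρ))]
      with t (htρ : t < ρ) hat
    exact hgf t hat (hρb ▸ EReal.coe_lt_coe_iff.2 htρ)
  · exact le_top

lemma coe_sub_le_legT {t : ℝ} (ht₁ : a < (t : EReal)) (ht₂ : (t : EReal) < b) (y : ℝ) :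
    ((t * y - f t : ℝ) : EReal) ≤ legT a b f y :=
  le_iSup (fun x : {t : ℝ // a < (t : EReal) ∧ (t : EReal) < b} =>
    ((x.1 * y - f x.1 : ℝ) : EReal)) ⟨t, ht₁, ht₂⟩

lemma legT_ne_bot {t : ℝ} (ht₁ : a < (t : EReal)) (ht₂ : (t : EReal) < b) (y : ℝ) :
    legT a b f y ≠ ⊥ :=
  ne_bot_of_le_ne_bot (EReal.coe_ne_bot _) (coe_sub_le_legT ht₁ ht₂ y)

lemma lowerSemicontinuous_legT : LowerSemicontinuous (legT a b f) :=
  lowerSemicontinuous_iSup fun _ =>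
    (continuous_coe_real_ereal.comp (by fun_prop)).lowerSemicontinuous

lemma coe_mul_le_fExt_add_legT (hab : a < b) {ρ y : ℝ} (hρ : fExt a b f ρ ≠ ⊥)
    (hy : legT a b f y ≠ ⊥) : ((ρ * y : ℝ) : EReal) ≤ fExt a b f ρ + legT a b f y := by
  rcases eq_or_ne (legT a b f y) ⊤ with htop | htop
  · rw [htop, EReal.add_top_of_ne_bot hρ]
    exact le_top
  obtain ⟨L, hL⟩ : ∃ L : ℝ, (L : EReal) = legT a b f y := ⟨_, EReal.coe_toReal htop hy⟩
  have hminor : ((ρ * y - L : ℝ) : EReal) ≤ fExt a b f ρ := by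
    refine coe_le_fExt_of_continuous hab (g := fun t => t * y - L) (by fun_prop)
      (fun t ht₁ ht₂ => ?_) ρ
    have := EReal.coe_le_coe_iff.1 (hL ▸ coe_sub_le_legT ht₁ ht₂ y)
    linarith
  calc ((ρ * y : ℝ) : EReal) = ((ρ * y - L : ℝ) : EReal) + L := by
        rw [← EReal.coe_add, sub_add_cancel]
    _ ≤ fExt a b f ρ + legT a b f y := hL ▸ add_le_add hminor le_rfl

end LegendrePair

section ChangeOfMeasure

variable {Ω : Type*} [MeasurableSpace Ω] {P Q : Measure Ω} [IsProbabilityMeasure P]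
  [IsProbabilityMeasure Q]

lemma lintegral_ofReal_toReal_rnDeriv (hQP : Q ≪ P) :
    ∫⁻ x, ENNReal.ofReal (Q.rnDeriv P x).toReal ∂P = 1 := by
  rw [← measure_univ (μ := Q), ← Measure.lintegral_rnDeriv hQP]
  exact lintegral_congr_ae ((Q.rnDeriv_ne_top P).mono fun x hx => ENNReal.ofReal_toReal hx)

lemma lintegral_toENNReal_neg_le (hQP : Q ≪ P) {F : ℝ → EReal} {s : ℝ}
    (hF : ∀ t, ((s * (t - 1) : ℝ) : EReal) ≤ F t) :
    ∫⁻ x, (-F (Q.rnDeriv P x).toReal).toENNReal ∂P ≤ 2 * ENNReal.ofReal |s| := by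
  have hpt (ρ : ℝ) (hρ : 0 ≤ ρ) :
      (-F ρ).toENNReal ≤ ENNReal.ofReal |s| * (ENNReal.ofReal ρ + 1) := by
    have hline : s * (1 - ρ) ≤ |s| * (ρ + 1) :=
      calc s * (1 - ρ) ≤ |s| * |1 - ρ| := (le_abs_self _).trans (abs_mul _ _).le
        _ ≤ |s| * (ρ + 1) := by gcongr; exact abs_le.2 ⟨by linarith, by linarith⟩
    have hneg : -F ρ ≤ ((|s| * (ρ + 1) : ℝ) : EReal) := by
      rw [EReal.neg_le, ← EReal.coe_neg]
      exact (EReal.coe_le_coe_iff.2 (by linarith)).trans (hF ρ)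
    rw [← ENNReal.ofReal_one, ← ENNReal.ofReal_add hρ zero_le_one,
      ← ENNReal.ofReal_mul (abs_nonneg s)]
    exact EReal.toENNReal_le_toENNReal hneg
  calc ∫⁻ x, (-F (Q.rnDeriv P x).toReal).toENNReal ∂P
      ≤ ∫⁻ x, ENNReal.ofReal |s| * (ENNReal.ofReal (Q.rnDeriv P x).toReal + 1) ∂P :=
        lintegral_mono fun x => hpt _ ENNReal.toReal_nonneg
    _ = 2 * ENNReal.ofReal |s| := by
        have hρ : Measurable fun x => ENNReal.ofReal (Q.rnDeriv P x).toReal :=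
          (Measure.measurable_rnDeriv Q P).ennreal_toReal.ennreal_ofReal
        rw [lintegral_const_mul _ (hρ.fun_add measurable_const),
          lintegral_add_right _ measurable_const,
          lintegral_ofReal_toReal_rnDeriv hQP, lintegral_one, measure_univ, one_add_one_eq_two,
          mul_comm]

lemma ofReal_mul_lintegral_ofReal_le (hQP : Q ≪ P) {F G : ℝ → EReal}
    (hyoung : ∀ ρ y, ENNReal.ofReal (ρ * y) ≤ (F ρ).toENNReal + (G y).toENNReal)
    (hG : Measurable G) {g : Ω → ℝ} (hg : Measurable g) {c : ℝ} (hc : 0 ≤ c) (ν : ℝ) :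
    ENNReal.ofReal c * ∫⁻ x, ENNReal.ofReal (g x) ∂Q ≤
      ∫⁻ x, (F (Q.rnDeriv P x).toReal).toENNReal ∂P + ENNReal.ofReal |ν| +
        ∫⁻ x, (G (c * g x - ν)).toENNReal ∂P := by
  have hpt (ρ : ℝ) (hρ : 0 ≤ ρ) (x : Ω) :
      ENNReal.ofReal c * (ENNReal.ofReal ρ * ENNReal.ofReal (g x)) ≤
        (F ρ).toENNReal + (ENNReal.ofReal |ν| * ENNReal.ofReal ρ +
          (G (c * g x - ν)).toENNReal) :=
    calc ENNReal.ofReal c * (ENNReal.ofReal ρ * ENNReal.ofReal (g x))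
        = ENNReal.ofReal (ρ * (c * g x - ν) + ν * ρ) := by
          rw [← ENNReal.ofReal_mul hρ, ← ENNReal.ofReal_mul hc]
          congr 1
          ring
      _ ≤ ENNReal.ofReal (ρ * (c * g x - ν) + |ν| * ρ) :=
          ENNReal.ofReal_le_ofReal (by gcongr; exact le_abs_self ν)
      _ ≤ ENNReal.ofReal (ρ * (c * g x - ν)) + ENNReal.ofReal (|ν| * ρ) := ENNReal.ofReal_add_le
      _ ≤ _ := by
          rw [ENNReal.ofReal_mul (abs_nonneg ν), add_comm (ENNReal.ofReal |ν| * _), ← add_assoc]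
          gcongr
          exact hyoung _ _
  have hρ : Measurable fun x => ENNReal.ofReal (Q.rnDeriv P x).toReal :=
    (Measure.measurable_rnDeriv Q P).ennreal_toReal.ennreal_ofReal
  have hGg : Measurable fun x => (G (c * g x - ν)).toENNReal :=
    (hG.comp ((hg.const_mul c).sub_const ν)).ereal_toENNReal
  calc ENNReal.ofReal c * ∫⁻ x, ENNReal.ofReal (g x) ∂Q
      = ∫⁻ x, ENNReal.ofReal c *
          (ENNReal.ofReal (Q.rnDeriv P x).toReal * ENNReal.ofReal (g x)) ∂P := by
        rw [← lintegral_rnDeriv_mul hQP hg.ennreal_ofReal.aemeasurable,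
          ← lintegral_const_mul' _ _ ENNReal.ofReal_ne_top]
        refine lintegral_congr_ae ((Q.rnDeriv_ne_top P).mono fun x hx => ?_)
        dsimp only
        rw [ENNReal.ofReal_toReal hx]
    _ ≤ ∫⁻ x, (F (Q.rnDeriv P x).toReal).toENNReal +
          (ENNReal.ofReal |ν| * ENNReal.ofReal (Q.rnDeriv P x).toReal +
            (G (c * g x - ν)).toENNReal) ∂P :=
        lintegral_mono fun x => hpt _ ENNReal.toReal_nonneg x
    _ = _ := by
        rw [lintegral_add_right _ ((hρ.const_mul _).fun_add hGg), lintegral_add_right _ hGg,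
          lintegral_const_mul _ hρ,
          lintegral_ofReal_toReal_rnDeriv hQP, mul_one, add_assoc]

end ChangeOfMeasure

section Integral

variable {Ω : Type*} [MeasurableSpace Ω] {μ : Measure Ω}

lemma lintegral_toENNReal_le_of_feexp_le {g : Ω → EReal} {η : ℝ} (h : feexp μ g ≤ η)
    (hneg : ∫⁻ x, (-g x).toENNReal ∂μ ≠ ⊤) :
    ∫⁻ x, (g x).toENNReal ∂μ ≤ ENNReal.ofReal η + ∫⁻ x, (-g x).toENNReal ∂μ := by
  rw [feexp, erealPos_eq_toENNReal] at h
  split_ifs at h with hpos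
  · exact absurd h (by simp)
  rw [← EReal.coe_ennreal_toReal hneg, ← EReal.coe_sub, EReal.coe_le_coe_iff] at h
  calc ∫⁻ x, (g x).toENNReal ∂μ = ENNReal.ofReal (∫⁻ x, (g x).toENNReal ∂μ).toReal :=
        (ENNReal.ofReal_toReal hpos).symm
    _ ≤ ENNReal.ofReal (η + (∫⁻ x, (-g x).toENNReal ∂μ).toReal) :=
        ENNReal.ofReal_le_ofReal (by linarith)
    _ ≤ ENNReal.ofReal η + ∫⁻ x, (-g x).toENNReal ∂μ := by
        rw [← ENNReal.ofReal_toReal hneg, ENNReal.toReal_ofReal ENNReal.toReal_nonneg]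
        exact ENNReal.ofReal_add_le

lemma integral_mem_Icc_of_lintegral_ofReal_le {g : Ω → ℝ} (hg : AEStronglyMeasurable g μ)
    {A B : ℝ≥0∞} (hA : A ≠ ⊤) (hB : B ≠ ⊤)
    (hpos : ∫⁻ x, ENNReal.ofReal (g x) ∂μ ≤ A) (hneg : ∫⁻ x, ENNReal.ofReal (-g x) ∂μ ≤ B) :
    ∫ x, g x ∂μ ∈ Icc (-B.toReal) A.toReal := by
  have hint : Integrable g μ := by
    refine ⟨hg, ?_⟩
    calc ∫⁻ x, ‖g x‖ₑ ∂μ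
        ≤ ∫⁻ x, ENNReal.ofReal (g x) + ENNReal.ofReal (-g x) ∂μ := by
          refine lintegral_mono fun x => ?_
          rw [Real.enorm_eq_ofReal_abs]
          rcases le_total 0 (g x) with hx | hx
          · rw [abs_of_nonneg hx]; exact le_self_add
          · rw [abs_of_nonpos hx]; exact le_add_self
      _ ≤ A + B := by
          rw [lintegral_add_left' hg.aemeasurable.ennreal_ofReal]
          exact add_le_add hpos hneg
      _ < ⊤ := ENNReal.add_lt_top.2 ⟨hA.lt_top, hB.lt_top⟩
  rw [integral_eq_lintegral_pos_part_sub_lintegral_neg_part hint]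
  have h₁ := ENNReal.toReal_mono hA hpos
  have h₂ := ENNReal.toReal_mono hB hneg
  constructor <;> linarith [ENNReal.toReal_nonneg (a := ∫⁻ x, ENNReal.ofReal (g x) ∂μ),
    ENNReal.toReal_nonneg (a := ∫⁻ x, ENNReal.ofReal (-g x) ∂μ)]

end Integral

section FDivergence

variable {Ω : Type*} [MeasurableSpace Ω] {a b : EReal} {f : ℝ → ℝ} {P Q : Measure Ω}

lemma absolutelyContinuous_of_fDivg_ne_top (h : fDivg a b f Q P ≠ ⊤) : Q ≪ P := by
  by_contra hQP
  exact h (if_neg hQP)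

variable [IsProbabilityMeasure P] [IsProbabilityMeasure Q]

lemma lintegral_ofReal_le_of_fDivg_le (ha1 : a < 1) (hb1 : (1 : EReal) < b) {s : ℝ}
    (hs : ∀ t : ℝ, a < (t : EReal) → (t : EReal) < b → s * (t - 1) ≤ f t) {η : ℝ}
    (hQ : fDivg a b f Q P ≤ η) {g : Ω → ℝ} (hg : Measurable g) {c : ℝ} (hc : 0 < c)
    (ν : ℝ) :
    ∫⁻ x, ENNReal.ofReal (g x) ∂Q ≤
      (ENNReal.ofReal η + 2 * ENNReal.ofReal |s| + ENNReal.ofReal |ν| +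
        ∫⁻ x, (legT a b f (c * g x - ν)).toENNReal ∂P) / ENNReal.ofReal c := by
  have hab : a < b := ha1.trans hb1
  have hQP : Q ≪ P := absolutelyContinuous_of_fDivg_ne_top (ne_top_of_le_ne_top (by simp) hQ)
  have hF (ρ : ℝ) : ((s * (ρ - 1) : ℝ) : EReal) ≤ fExt a b f ρ :=
    coe_le_fExt_of_continuous hab (g := fun t => s * (t - 1)) (by fun_prop) hs ρ
  have hyoung (ρ y : ℝ) :
      ENNReal.ofReal (ρ * y) ≤ (fExt a b f ρ).toENNReal + (legT a b f y).toENNReal :=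
    (EReal.toENNReal_le_toENNReal (coe_mul_le_fExt_add_legT hab
      (ne_bot_of_le_ne_bot (EReal.coe_ne_bot _) (hF ρ))
      (legT_ne_bot (t := 1) (by exact_mod_cast ha1) (by exact_mod_cast hb1) y))).trans
      EReal.toENNReal_add_le
  have hneg := lintegral_toENNReal_neg_le hQP hF
  have hpos := lintegral_toENNReal_le_of_feexp_le (by rwa [fDivg, if_pos hQP] at hQ)
    (ne_top_of_le_ne_top (by finiteness) hneg)
  rw [ENNReal.le_div_iff_mul_le (Or.inl (by simpa using hc)) (Or.inl ENNReal.ofReal_ne_top),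
    mul_comm]
  calc ENNReal.ofReal c * ∫⁻ x, ENNReal.ofReal (g x) ∂Q
      ≤ ∫⁻ x, (fExt a b f (Q.rnDeriv P x).toReal).toENNReal ∂P + ENNReal.ofReal |ν| +
          ∫⁻ x, (legT a b f (c * g x - ν)).toENNReal ∂P :=
        ofReal_mul_lintegral_ofReal_le hQP hyoung lowerSemicontinuous_legT.measurable hg hc.le ν
    _ ≤ _ := by gcongr; exact hpos.trans (add_le_add le_rfl hneg)

end FDivergence

theorem mean_bounds_on_fDiv_ball_general {Ω : Type*} [MeasurableSpace Ω]
    {a b : EReal} (ha1 : a < 1) (hb1 : (1 : EReal) < b)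
    {f : ℝ → ℝ} (hf : ConvexOn ℝ {t : ℝ | a < (t : EReal) ∧ (t : EReal) < b} f)
    (hf1 : f 1 = 0)
    (P : Measure Ω) [IsProbabilityMeasure P]
    {k : ℕ} {φ : Fin k → Ω → ℝ}
    (hφm : ∀ i, Measurable (φ i))
    (hintp : ∀ i, ∃ cp > (0 : ℝ), ∃ νp : ℝ, ∫⁻ x, erealPos (legT a b f (cp * φ i x - νp)) ∂P < ⊤)
    (hintm : ∀ i, ∃ cm > (0 : ℝ), ∃ νm : ℝ, ∫⁻ x, erealPos (legT a b f (-cm * φ i x - νm)) ∂P < ⊤) :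
    ∀ η : ℝ, 0 < η → ∃ Mm Mp : Fin k → ℝ,
      ∀ (Q : Measure Ω), IsProbabilityMeasure Q → fDivg a b f Q P ≤ (η : EReal) →
        ∀ i, ∫ x, φ i x ∂Q ∈ Icc (-(Mm i)) (Mp i) := by
  intro η _
  have h1 : (1 : ℝ) ∈ interior {t : ℝ | a < (t : EReal) ∧ (t : EReal) < b} := by
    rw [isOpen_setOf_coe_mem_Ioo.interior_eq]
    exact ⟨by exact_mod_cast ha1, by exact_mod_cast hb1⟩
  obtain ⟨s, hs⟩ :
      ∃ s : ℝ, ∀ t : ℝ, a < (t : EReal) → (t : EReal) < b → s * (t - 1) ≤ f t :=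
    ⟨_, fun t ht₁ ht₂ => by simpa [hf1] using hf.add_rightDeriv_mul_sub_le h1 ⟨ht₁, ht₂⟩⟩
  choose cp hcp νp hp using hintp
  choose cm hcm νm hm using hintm
  let bound (c ν : ℝ) (I : ℝ≥0∞) : ℝ≥0∞ :=
    (ENNReal.ofReal η + 2 * ENNReal.ofReal |s| + ENNReal.ofReal |ν| + I) / ENNReal.ofReal c
  have bound_ne_top {c : ℝ} (hc : 0 < c) (ν : ℝ) {I : ℝ≥0∞} (hI : I < ⊤) :
      bound c ν I ≠ ⊤ :=
    ENNReal.div_ne_top (by finiteness) (by simpa using hc)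
  refine ⟨fun i => (bound (cm i) (νm i) _).toReal, fun i => (bound (cp i) (νp i) _).toReal,
    fun Q _ hQ i => integral_mem_Icc_of_lintegral_ofReal_le (hφm i).aestronglyMeasurable
      (bound_ne_top (hcp i) _ (hp i)) (bound_ne_top (hcm i) _ (hm i))
      (lintegral_ofReal_le_of_fDivg_le ha1 hb1 hs hQ (hφm i) (hcp i) _) ?_⟩
  simpa only [bound, erealPos_eq_toENNReal, mul_neg, neg_mul] using
    lintegral_ofReal_le_of_fDivg_le ha1 hb1 hs hQ (g := fun x => -φ i x) (hφm i).neg (hcm i)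
      (νm i)

/-- **Uniform bounds on means over f-divergence neighborhoods.** Under the two-sided
integrability conditions on each `φ i`, for every `η > 0` there are real constants
`M⁻ i, M⁺ i` such that `E_Q[φ i] ∈ [-M⁻ i, M⁺ i]` for all probability measures `Q` with
`D_f(Q,P) ≤ η`. -/
theorem mean_bounds_on_fDiv_ball {Ω : Type*} [MeasurableSpace Ω]
    {a b : EReal} (ha : 0 ≤ a) (ha1 : a < 1) (hb1 : (1 : EReal) < b)
    {f : ℝ → ℝ} (hf : ConvexOn ℝ {t : ℝ | a < (t : EReal) ∧ (t : EReal) < b} f)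
    (hf1 : f 1 = 0)
    (P : Measure Ω) [IsProbabilityMeasure P]
    {k : ℕ} {φ : Fin k → Ω → ℝ}
    (hφm : ∀ i, Measurable (φ i)) (hφ1 : ∀ i, Integrable (φ i) P)
    (hintp : ∀ i, ∃ cp > (0 : ℝ), ∃ νp : ℝ, ∫⁻ x, erealPos (legT a b f (cp * φ i x - νp)) ∂P < ⊤)
    (hintm : ∀ i, ∃ cm > (0 : ℝ), ∃ νm : ℝ, ∫⁻ x, erealPos (legT a b f (-cm * φ i x - νm)) ∂P < ⊤) :
    ∀ η : ℝ, 0 < η → ∃ Mm Mp : Fin k → ℝ,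
      ∀ (Q : Measure Ω), IsProbabilityMeasure Q → fDivg a b f Q P ≤ (η : EReal) →
        ∀ i, ∫ x, φ i x ∂Q ∈ Icc (-(Mm i)) (Mp i) :=
  mean_bounds_on_fDiv_ball_general ha1 hb1 hf hf1 P hφm hintp hintm
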